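/- arXiv:math/9805019 — 3 statements merged into one kernel-verified Lean document; each statement's English description precedes it below -/
import Mathlib

section
/- Let n be a natural number, let P : ℝⁿ → Matrix (Fin n) (Fin n) ℝ be smooth with P^{kl}(x) = −P^{lk}(x) for all k, l, x, let a : ℝⁿ → ℝⁿ be smooth, and suppose (P, a) is a Jacobi tensor. Then for every smooth φ : ℝⁿ → ℝ, the gauge transform (P̃, ã) of (P, a) by φ is also a Jacobi tensor, i.e., its bracket {·,·}_{(P̃,ã)} satisfies the Jacobi identity for all smooth functions. -/
/-- Partial derivative `∂f/∂x^k` at `x`. -/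
noncomputable def pd {n : ℕ} (f : (Fin n → ℝ) → ℝ) (k : Fin n) (x : Fin n → ℝ) : ℝ :=
  fderiv ℝ f x (Pi.single k 1)

/-- The Jacobi bracket `{f,g}_{(P,a)}`. -/
noncomputable def jacobiBracket {n : ℕ} (P : (Fin n → ℝ) → Matrix (Fin n) (Fin n) ℝ)
    (a : (Fin n → ℝ) → Fin n → ℝ) (f g : (Fin n → ℝ) → ℝ) : (Fin n → ℝ) → ℝ :=
  fun x => (∑ k, ∑ l, P x k l * pd f k x * pd g l x)
    + ∑ k, a x k * (f x * pd g k x - g x * pd f k x)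

/-- `(P,a)` is a Jacobi tensor: its bracket satisfies the Jacobi identity on smooth functions. -/
def IsJacobiTensor {n : ℕ} (P : (Fin n → ℝ) → Matrix (Fin n) (Fin n) ℝ)
    (a : (Fin n → ℝ) → Fin n → ℝ) : Prop :=
  ∀ f g h : (Fin n → ℝ) → ℝ, ContDiff ℝ (⊤ : ℕ∞) f → ContDiff ℝ (⊤ : ℕ∞) g → ContDiff ℝ (⊤ : ℕ∞) h →
    jacobiBracket P a f (jacobiBracket P a g h)
      + jacobiBracket P a g (jacobiBracket P a h f)
      + jacobiBracket P a h (jacobiBracket P a f g) = 0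

/-- Gauge transform of the bivector: `P̃^{kl}(x) = e^{φ(x)} P^{kl}(x)`. -/
noncomputable def gaugeP {n : ℕ} (P : (Fin n → ℝ) → Matrix (Fin n) (Fin n) ℝ)
    (φ : (Fin n → ℝ) → ℝ) : (Fin n → ℝ) → Matrix (Fin n) (Fin n) ℝ :=
  fun x => Matrix.of fun k l => Real.exp (φ x) * P x k l

/-- Gauge transform of the vector field:
`ã^k(x) = e^{φ(x)} (a^k(x) - Σ_j P^{kj}(x) ∂φ/∂x^j(x))`. -/
noncomputable def gaugeA {n : ℕ} (P : (Fin n → ℝ) → Matrix (Fin n) (Fin n) ℝ)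
    (a : (Fin n → ℝ) → Fin n → ℝ) (φ : (Fin n → ℝ) → ℝ) : (Fin n → ℝ) → Fin n → ℝ :=
  fun x k => Real.exp (φ x) * (a x k - ∑ j, P x k j * pd φ j x)

/-! ### Auxiliary lemmas -/

lemma contDiff_pd {n : ℕ} {f : (Fin n → ℝ) → ℝ} (hf : ContDiff ℝ (⊤ : ℕ∞) f) (k : Fin n) :
    ContDiff ℝ (⊤ : ℕ∞) (pd f k) := by
  unfold pd
  exact (hf.fderiv_right (by simp)).clm_apply contDiff_const

lemma pd_exp_mul {n : ℕ} {φ f : (Fin n → ℝ) → ℝ} (hφ : ContDiff ℝ (⊤ : ℕ∞) φ)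
    (hf : ContDiff ℝ (⊤ : ℕ∞) f) (k : Fin n) (x : Fin n → ℝ) :
    pd (fun y => Real.exp (φ y) * f y) k x
      = Real.exp (φ x) * (pd f k x + f x * pd φ k x) := by
  have hφd : DifferentiableAt ℝ φ x := (hφ.differentiable (by simp)).differentiableAt
  have hed : DifferentiableAt ℝ (fun y => Real.exp (φ y)) x := hφd.exp
  have hfd : DifferentiableAt ℝ f x := (hf.differentiable (by simp)).differentiableAt
  unfold pd
  rw [fderiv_fun_mul hed hfd, fderiv_exp hφd]
  simp
  ring

lemma swap_skew {n : ℕ} (M : Matrix (Fin n) (Fin n) ℝ) (hM : ∀ k l, M k l = - M l k)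
    (w v : Fin n → ℝ) :
    ∑ k, ∑ l, M k l * w k * v l = - ∑ k, (∑ j, M k j * w j) * v k := by
  rw [Finset.sum_comm]
  rw [← Finset.sum_neg_distrib]
  apply Finset.sum_congr rfl
  intro l _
  calc ∑ k, M k l * w k * v l = ∑ k, -(M l k * w k * v l) := by
        apply Finset.sum_congr rfl; intro k _; rw [hM k l]; ring
    _ = -((∑ j, M l j * w j) * v l) := by rw [Finset.sum_neg_distrib, Finset.sum_mul]

lemma key_sum {n : ℕ} (M : Matrix (Fin n) (Fin n) ℝ) (hM : ∀ k l, M k l = - M l k)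
    (u v w : Fin n → ℝ) (f g : ℝ) :
    ∑ k, ∑ l, M k l * (u k + f * w k) * (v l + g * w l)
      = (∑ k, ∑ l, M k l * u k * v l)
        - f * ∑ k, (∑ j, M k j * w j) * v k
        + g * ∑ k, (∑ j, M k j * w j) * u k := by
  have h4 : ∑ k, ∑ l, M k l * w k * w l = 0 := by
    have := swap_skew M hM w w
    have h2 : ∑ k, (∑ j, M k j * w j) * w k = ∑ k, ∑ l, M k l * w k * w l := by
      apply Finset.sum_congr rfl; intro k _
      rw [Finset.sum_mul]
      apply Finset.sum_congr rfl; intro l _; ring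
    rw [h2] at this; linarith
  have h3 : ∑ k, ∑ l, M k l * (f * w k) * v l = - f * ∑ k, (∑ j, M k j * w j) * v k := by
    have := swap_skew M hM w v
    calc ∑ k, ∑ l, M k l * (f * w k) * v l = f * ∑ k, ∑ l, M k l * w k * v l := by
          rw [Finset.mul_sum]; apply Finset.sum_congr rfl; intro k _
          rw [Finset.mul_sum]; apply Finset.sum_congr rfl; intro l _; ring
      _ = - f * ∑ k, (∑ j, M k j * w j) * v k := by rw [this]; ring
  have h2 : ∑ k, ∑ l, M k l * u k * (g * w l) = g * ∑ k, (∑ j, M k j * w j) * u k := by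
    rw [Finset.mul_sum]; apply Finset.sum_congr rfl; intro k _
    rw [Finset.sum_mul, Finset.mul_sum]; apply Finset.sum_congr rfl; intro l _; ring
  have expand : ∑ k, ∑ l, M k l * (u k + f * w k) * (v l + g * w l)
      = (∑ k, ∑ l, M k l * u k * v l) + (∑ k, ∑ l, M k l * u k * (g * w l))
        + (∑ k, ∑ l, M k l * (f * w k) * v l) + f * g * (∑ k, ∑ l, M k l * w k * w l) := by
    rw [Finset.mul_sum, ← Finset.sum_add_distrib, ← Finset.sum_add_distrib, ← Finset.sum_add_distrib]
    apply Finset.sum_congr rfl; intro k _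
    rw [Finset.mul_sum, ← Finset.sum_add_distrib, ← Finset.sum_add_distrib, ← Finset.sum_add_distrib]
    apply Finset.sum_congr rfl; intro l _; ring
  rw [expand, h2, h3, h4]; ring

lemma bracket_identity {n : ℕ} (M : Matrix (Fin n) (Fin n) ℝ)
    (hM : ∀ k l, M k l = - M l k) (A u v w : Fin n → ℝ) (E F G : ℝ) :
    E * ((∑ k, ∑ l, (E * M k l) * u k * v l)
        + ∑ k, (E * (A k - ∑ j, M k j * w j)) * (F * v k - G * u k))
      = (∑ k, ∑ l, M k l * (E * (u k + F * w k)) * (E * (v l + G * w l)))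
        + ∑ k, A k * ((E * F) * (E * (v k + G * w k)) - (E * G) * (E * (u k + F * w k))) := by
  set S1 := ∑ k, ∑ l, M k l * u k * v l with hS1
  set T := ∑ k, A k * (F * v k - G * u k) with hT
  set Qv := ∑ k, (∑ j, M k j * w j) * v k with hQv
  set Qu := ∑ k, (∑ j, M k j * w j) * u k with hQu
  have l1 : ∑ k, ∑ l, (E * M k l) * u k * v l = E * S1 := by
    rw [hS1, Finset.mul_sum]
    apply Finset.sum_congr rfl; intro k _
    rw [Finset.mul_sum]
    apply Finset.sum_congr rfl; intro l _; ring
  have l2 : ∑ k, (E * (A k - ∑ j, M k j * w j)) * (F * v k - G * u k)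
      = E * T - (E * F) * Qv + (E * G) * Qu := by
    calc ∑ k, (E * (A k - ∑ j, M k j * w j)) * (F * v k - G * u k)
        = ∑ k, ((E * (A k * (F * v k - G * u k)) - (E * F) * ((∑ j, M k j * w j) * v k))
            + (E * G) * ((∑ j, M k j * w j) * u k)) := by
          apply Finset.sum_congr rfl; intro k _; ring
      _ = E * T - (E * F) * Qv + (E * G) * Qu := by
          rw [Finset.sum_add_distrib, Finset.sum_sub_distrib, ← Finset.mul_sum,
            ← Finset.mul_sum, ← Finset.mul_sum, hT, hQv, hQu]
  have r1 : ∑ k, ∑ l, M k l * (E * (u k + F * w k)) * (E * (v l + G * w l))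
      = E * E * (S1 - F * Qv + G * Qu) := by
    calc ∑ k, ∑ l, M k l * (E * (u k + F * w k)) * (E * (v l + G * w l))
        = E * E * ∑ k, ∑ l, M k l * (u k + F * w k) * (v l + G * w l) := by
          rw [Finset.mul_sum]
          apply Finset.sum_congr rfl; intro k _
          rw [Finset.mul_sum]
          apply Finset.sum_congr rfl; intro l _; ring
      _ = E * E * (S1 - F * Qv + G * Qu) := by rw [key_sum M hM u v w F G, hS1, hQv, hQu]
  have r2 : ∑ k, A k * ((E * F) * (E * (v k + G * w k)) - (E * G) * (E * (u k + F * w k)))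
      = E * E * T := by
    rw [hT, Finset.mul_sum]
    apply Finset.sum_congr rfl; intro k _; ring
  rw [l1, l2, r1, r2]; ring

lemma gauge_bracket {n : ℕ} (P : (Fin n → ℝ) → Matrix (Fin n) (Fin n) ℝ)
    (a : (Fin n → ℝ) → Fin n → ℝ) (hPskew : ∀ x k l, P x k l = - P x l k)
    (φ f g : (Fin n → ℝ) → ℝ) (hφ : ContDiff ℝ (⊤ : ℕ∞) φ) (hf : ContDiff ℝ (⊤ : ℕ∞) f)
    (hg : ContDiff ℝ (⊤ : ℕ∞) g) (x : Fin n → ℝ) :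
    Real.exp (φ x) * jacobiBracket (gaugeP P φ) (gaugeA P a φ) f g x
      = jacobiBracket P a (fun y => Real.exp (φ y) * f y) (fun y => Real.exp (φ y) * g y) x := by
  simp only [jacobiBracket, gaugeP, gaugeA, Matrix.of_apply, pd_exp_mul hφ hf, pd_exp_mul hφ hg]
  exact bracket_identity (P x) (fun k l => hPskew x k l) (a x) (fun k => pd f k x)
    (fun k => pd g k x) (fun k => pd φ k x) (Real.exp (φ x)) (f x) (g x)

lemma contDiff_jacobiBracket {n : ℕ} {P : (Fin n → ℝ) → Matrix (Fin n) (Fin n) ℝ}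
    {a : (Fin n → ℝ) → Fin n → ℝ} {f g : (Fin n → ℝ) → ℝ}
    (hP : ∀ k l, ContDiff ℝ (⊤ : ℕ∞) (fun x => P x k l)) (ha : ∀ k, ContDiff ℝ (⊤ : ℕ∞) (fun x => a x k))
    (hf : ContDiff ℝ (⊤ : ℕ∞) f) (hg : ContDiff ℝ (⊤ : ℕ∞) g) :
    ContDiff ℝ (⊤ : ℕ∞) (jacobiBracket P a f g) := by
  unfold jacobiBracket
  exact (ContDiff.sum fun k _ => ContDiff.sum fun l _ =>
      ((hP k l).mul (contDiff_pd hf k)).mul (contDiff_pd hg l)).add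
    (ContDiff.sum fun k _ => (ha k).mul
      ((hf.mul (contDiff_pd hg k)).sub (hg.mul (contDiff_pd hf k))))

theorem gauge_isJacobiTensor {n : ℕ} (P : (Fin n → ℝ) → Matrix (Fin n) (Fin n) ℝ)
    (a : (Fin n → ℝ) → Fin n → ℝ)
    (hP : ∀ k l, ContDiff ℝ (⊤ : ℕ∞) (fun x => P x k l))
    (hPskew : ∀ x k l, P x k l = - P x l k)
    (ha : ∀ k, ContDiff ℝ (⊤ : ℕ∞) (fun x => a x k))
    (hJac : IsJacobiTensor P a) :
    ∀ φ : (Fin n → ℝ) → ℝ, ContDiff ℝ (⊤ : ℕ∞) φ →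
      IsJacobiTensor (gaugeP P φ) (gaugeA P a φ) := by
  intro φ hφ f g h hf hg hh
  have hE : ContDiff ℝ (⊤ : ℕ∞) (fun y => Real.exp (φ y)) := Real.contDiff_exp.comp hφ
  have hEneg : ContDiff ℝ (⊤ : ℕ∞) (fun y => Real.exp (-(φ y))) := Real.contDiff_exp.comp hφ.neg
  -- the gauged functions
  have hF : ContDiff ℝ (⊤ : ℕ∞) (fun y => Real.exp (φ y) * f y) := hE.mul hf
  have hG : ContDiff ℝ (⊤ : ℕ∞) (fun y => Real.exp (φ y) * g y) := hE.mul hg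
  have hH : ContDiff ℝ (⊤ : ℕ∞) (fun y => Real.exp (φ y) * h y) := hE.mul hh
  -- gauged bracket rewritten
  have key : ∀ (u v : (Fin n → ℝ) → ℝ), ContDiff ℝ (⊤ : ℕ∞) u → ContDiff ℝ (⊤ : ℕ∞) v →
      jacobiBracket (gaugeP P φ) (gaugeA P a φ) u v
        = fun y => Real.exp (-(φ y)) * jacobiBracket P a
            (fun z => Real.exp (φ z) * u z) (fun z => Real.exp (φ z) * v z) y := by
    intro u v hu hv
    funext y
    rw [← gauge_bracket P a hPskew φ u v hφ hu hv y, Real.exp_neg]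
    field_simp
  have cancel : ∀ U V : (Fin n → ℝ) → ℝ,
      (fun z => Real.exp (φ z) * (Real.exp (-(φ z)) * jacobiBracket P a U V z))
        = jacobiBracket P a U V := by
    intro U V; funext z; rw [Real.exp_neg]; field_simp
  have hBGH : ContDiff ℝ (⊤ : ℕ∞) (fun y => Real.exp (-(φ y)) * jacobiBracket P a
      (fun z => Real.exp (φ z) * g z) (fun z => Real.exp (φ z) * h z) y) :=
    hEneg.mul (contDiff_jacobiBracket hP ha hG hH)
  have hBHF : ContDiff ℝ (⊤ : ℕ∞) (fun y => Real.exp (-(φ y)) * jacobiBracket P a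
      (fun z => Real.exp (φ z) * h z) (fun z => Real.exp (φ z) * f z) y) :=
    hEneg.mul (contDiff_jacobiBracket hP ha hH hF)
  have hBFG : ContDiff ℝ (⊤ : ℕ∞) (fun y => Real.exp (-(φ y)) * jacobiBracket P a
      (fun z => Real.exp (φ z) * f z) (fun z => Real.exp (φ z) * g z) y) :=
    hEneg.mul (contDiff_jacobiBracket hP ha hF hG)
  funext x
  simp only [Pi.add_apply, Pi.zero_apply]
  have hx : Real.exp (φ x)
      * (jacobiBracket (gaugeP P φ) (gaugeA P a φ) f
            (jacobiBracket (gaugeP P φ) (gaugeA P a φ) g h) x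
        + jacobiBracket (gaugeP P φ) (gaugeA P a φ) g
            (jacobiBracket (gaugeP P φ) (gaugeA P a φ) h f) x
        + jacobiBracket (gaugeP P φ) (gaugeA P a φ) h
            (jacobiBracket (gaugeP P φ) (gaugeA P a φ) f g) x) = 0 := by
    rw [key g h hg hh, key h f hh hf, key f g hf hg, mul_add, mul_add]
    rw [gauge_bracket P a hPskew φ f _ hφ hf hBGH x,
        gauge_bracket P a hPskew φ g _ hφ hg hBHF x,
        gauge_bracket P a hPskew φ h _ hφ hh hBFG x]
    rw [cancel, cancel, cancel]
    have := congrFun (hJac (fun z => Real.exp (φ z) * f z) (fun z => Real.exp (φ z) * g z)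
      (fun z => Real.exp (φ z) * h z) hF hG hH) x
    simpa using this
  have hne : Real.exp (φ x) ≠ 0 := Real.exp_ne_zero _
  exact (mul_eq_zero.mp hx).resolve_left hne
end

section
/- Let n be a natural number, let P : ℝⁿ → Matrix (Fin n) (Fin n) ℝ be smooth with P^{kl}(x) = −P^{lk}(x) for all k, l, x, let a : ℝⁿ → ℝⁿ be smooth, and suppose (P, a) is a Jacobi tensor. Let φ : ℝⁿ → ℝ be smooth and let (P̃, ã) be the gauge transform of (P, a) by φ. Then the gauge-transformed Jacobi tensor is compatible with the original one: the pair (P + P̃, a + ã) is again a Jacobi tensor, i.e., the bracket {·,·}_{(P+P̃, a+ã)} satisfies the Jacobi identity for all smooth functions. -/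
/-! ### Auxiliary lemmas -/

lemma pd_mul {n : ℕ} {u v : (Fin n → ℝ) → ℝ} {x : Fin n → ℝ}
    (hu : DifferentiableAt ℝ u x) (hv : DifferentiableAt ℝ v x) (k : Fin n) :
    pd (fun y => u y * v y) k x = pd u k x * v x + u x * pd v k x := by
  unfold pd
  rw [fderiv_fun_mul hu hv]
  simp only [ContinuousLinearMap.add_apply, ContinuousLinearMap.smul_apply, smul_eq_mul]
  ring

lemma pd_one_add_exp {n : ℕ} {φ : (Fin n → ℝ) → ℝ} {x : Fin n → ℝ}
    (hφ : DifferentiableAt ℝ φ x) (k : Fin n) :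
    pd (fun y => 1 + Real.exp (φ y)) k x = Real.exp (φ x) * pd φ k x := by
  unfold pd
  have h1 : HasFDerivAt (fun y => Real.exp (φ y)) (Real.exp (φ x) • fderiv ℝ φ x) x :=
    hφ.hasFDerivAt.exp
  have h2 := h1.const_add 1
  rw [h2.fderiv]
  simp

lemma pd_smooth {n : ℕ} {f : (Fin n → ℝ) → ℝ} (hf : ContDiff ℝ (⊤ : ℕ∞) f) (k : Fin n) :
    ContDiff ℝ (⊤ : ℕ∞) (fun x => pd f k x) :=
  (hf.fderiv_right (by simp)).clm_apply contDiff_const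

lemma jacobiBracket_smooth {n : ℕ} {P' : (Fin n → ℝ) → Matrix (Fin n) (Fin n) ℝ}
    {a' : (Fin n → ℝ) → Fin n → ℝ} {f g : (Fin n → ℝ) → ℝ}
    (hP' : ∀ k l, ContDiff ℝ (⊤ : ℕ∞) (fun x => P' x k l))
    (ha' : ∀ k, ContDiff ℝ (⊤ : ℕ∞) (fun x => a' x k))
    (hf : ContDiff ℝ (⊤ : ℕ∞) f) (hg : ContDiff ℝ (⊤ : ℕ∞) g) :
    ContDiff ℝ (⊤ : ℕ∞) (jacobiBracket P' a' f g) := by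
  unfold jacobiBracket
  apply ContDiff.add
  · apply ContDiff.sum; intro k _
    apply ContDiff.sum; intro l _
    exact ((hP' k l).mul (pd_smooth hf k)).mul (pd_smooth hg l)
  · apply ContDiff.sum; intro k _
    exact (ha' k).mul ((hf.mul (pd_smooth hg k)).sub (hg.mul (pd_smooth hf k)))

lemma swap_sum {n : ℕ} (P : Matrix (Fin n) (Fin n) ℝ) (hP : ∀ k l, P k l = -P l k)
    (u v : Fin n → ℝ) :
    (∑ k, ∑ l, P k l * u k * v l) = -(∑ k, ∑ l, P k l * v k * u l) := by
  rw [Finset.sum_comm, ← Finset.sum_neg_distrib]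
  refine Finset.sum_congr rfl fun k _ => ?_
  rw [← Finset.sum_neg_distrib]
  refine Finset.sum_congr rfl fun l _ => ?_
  rw [hP l k]; ring

lemma key {n : ℕ} (P : Matrix (Fin n) (Fin n) ℝ) (hP : ∀ k l, P k l = -P l k)
    (a : Fin n → ℝ) (e fx gx : ℝ) (dφ df dg : Fin n → ℝ) :
    (1 + e) * ((∑ k, ∑ l, (P k l + e * P k l) * df k * dg l)
      + ∑ k, (a k + e * (a k - ∑ j, P k j * dφ j)) * (fx * dg k - gx * df k))
    = (∑ k, ∑ l, P k l * (e * dφ k * fx + (1 + e) * df k) * (e * dφ l * gx + (1 + e) * dg l))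
      + ∑ k, a k * ((1 + e) * fx * (e * dφ k * gx + (1 + e) * dg k)
          - (1 + e) * gx * (e * dφ k * fx + (1 + e) * df k)) := by
  have h1 : (∑ k, ∑ l, P k l * (e * dφ k * fx + (1 + e) * df k) * (e * dφ l * gx + (1 + e) * dg l))
      = (e * fx) * (e * gx) * (∑ k, ∑ l, P k l * dφ k * dφ l)
        + (e * fx) * (1 + e) * (∑ k, ∑ l, P k l * dφ k * dg l)
        + (1 + e) * (e * gx) * (∑ k, ∑ l, P k l * df k * dφ l)
        + (1 + e) * (1 + e) * (∑ k, ∑ l, P k l * df k * dg l) := by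
    simp only [Finset.mul_sum, ← Finset.sum_add_distrib]
    exact Finset.sum_congr rfl fun k _ => Finset.sum_congr rfl fun l _ => by ring
  have h2 : (∑ k, ∑ l, (P k l + e * P k l) * df k * dg l)
      = (1 + e) * (∑ k, ∑ l, P k l * df k * dg l) := by
    simp only [Finset.mul_sum]
    exact Finset.sum_congr rfl fun k _ => Finset.sum_congr rfl fun l _ => by ring
  have h3 : (∑ k, (a k + e * (a k - ∑ j, P k j * dφ j)) * (fx * dg k - gx * df k))
      = (1 + e) * (∑ k, a k * (fx * dg k - gx * df k))
        - e * fx * (∑ k, ∑ l, P k l * dg k * dφ l)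
        + e * gx * (∑ k, ∑ l, P k l * df k * dφ l) := by
    rw [Finset.mul_sum, Finset.mul_sum, Finset.mul_sum, ← Finset.sum_sub_distrib,
      ← Finset.sum_add_distrib]
    refine Finset.sum_congr rfl fun k _ => ?_
    have hk1 : (∑ l, P k l * dg k * dφ l) = dg k * (∑ j, P k j * dφ j) := by
      rw [Finset.mul_sum]; exact Finset.sum_congr rfl fun l _ => by ring
    have hk2 : (∑ l, P k l * df k * dφ l) = df k * (∑ j, P k j * dφ j) := by
      rw [Finset.mul_sum]; exact Finset.sum_congr rfl fun l _ => by ring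
    rw [hk1, hk2]; ring
  have h4 : (∑ k, a k * ((1 + e) * fx * (e * dφ k * gx + (1 + e) * dg k)
        - (1 + e) * gx * (e * dφ k * fx + (1 + e) * df k)))
      = (1 + e) * (1 + e) * (∑ k, a k * (fx * dg k - gx * df k)) := by
    rw [Finset.mul_sum]
    exact Finset.sum_congr rfl fun k _ => by ring
  have hself := swap_sum P hP dφ dφ
  have hswap1 := swap_sum P hP dφ dg
  rw [h1, h2, h3, h4]
  have hs : (∑ k, ∑ l, P k l * dφ k * dφ l) = 0 := by linarith
  rw [hs]
  linear_combination (-(1 + e) * e * fx) * hswap1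

theorem gauge_compatible {n : ℕ} (P : (Fin n → ℝ) → Matrix (Fin n) (Fin n) ℝ)
    (a : (Fin n → ℝ) → Fin n → ℝ)
    (hP : ∀ k l, ContDiff ℝ (⊤ : ℕ∞) (fun x => P x k l))
    (hPskew : ∀ x k l, P x k l = - P x l k)
    (ha : ∀ k, ContDiff ℝ (⊤ : ℕ∞) (fun x => a x k))
    (hJac : IsJacobiTensor P a)
    (φ : (Fin n → ℝ) → ℝ) (hφ : ContDiff ℝ (⊤ : ℕ∞) φ) :
    IsJacobiTensor (fun x => P x + gaugeP P φ x) (fun x => a x + gaugeA P a φ x) := by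
  set Q : (Fin n → ℝ) → Matrix (Fin n) (Fin n) ℝ := fun x => P x + gaugeP P φ x with hQdef
  set b : (Fin n → ℝ) → Fin n → ℝ := fun x => a x + gaugeA P a φ x with hbdef
  set c : (Fin n → ℝ) → ℝ := fun y => 1 + Real.exp (φ y) with hcdef
  have hcs : ContDiff ℝ (⊤ : ℕ∞) c := contDiff_const.add (Real.contDiff_exp.comp hφ)
  have hcne : ∀ x, c x ≠ 0 := fun x => by positivity
  -- entrywise smoothness of Q and b
  have hQ : ∀ k l, ContDiff ℝ (⊤ : ℕ∞) (fun x => Q x k l) := by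
    intro k l
    have : (fun x => Q x k l) = fun x => P x k l + Real.exp (φ x) * P x k l := by
      funext x; simp [hQdef, gaugeP, Matrix.add_apply]
    rw [this]
    exact (hP k l).add ((Real.contDiff_exp.comp hφ).mul (hP k l))
  have hb : ∀ k, ContDiff ℝ (⊤ : ℕ∞) (fun x => b x k) := by
    intro k
    have : (fun x => b x k)
        = fun x => a x k + Real.exp (φ x) * (a x k - ∑ j, P x k j * pd φ j x) := by
      funext x; simp [hbdef, gaugeA]
    rw [this]
    refine (ha k).add ((Real.contDiff_exp.comp hφ).mul ((ha k).sub ?_))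
    exact ContDiff.sum fun j _ => (hP k j).mul (pd_smooth hφ j)
  -- the bridge identity
  have bridge : ∀ (u v : (Fin n → ℝ) → ℝ), ContDiff ℝ (⊤ : ℕ∞) u → ContDiff ℝ (⊤ : ℕ∞) v → ∀ x,
      c x * jacobiBracket Q b u v x
        = jacobiBracket P a (fun y => c y * u y) (fun y => c y * v y) x := by
    intro u v hu hv x
    have hud : DifferentiableAt ℝ u x := (hu.differentiable (by simp)).differentiableAt
    have hvd : DifferentiableAt ℝ v x := (hv.differentiable (by simp)).differentiableAt
    have hcd : DifferentiableAt ℝ c x := (hcs.differentiable (by simp)).differentiableAt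
    have hφd : DifferentiableAt ℝ φ x := (hφ.differentiable (by simp)).differentiableAt
    have hpdu : ∀ k, pd (fun y => c y * u y) k x
        = Real.exp (φ x) * pd φ k x * u x + c x * pd u k x := by
      intro k
      rw [pd_mul hcd hud k, pd_one_add_exp hφd k]
    have hpdv : ∀ k, pd (fun y => c y * v y) k x
        = Real.exp (φ x) * pd φ k x * v x + c x * pd v k x := by
      intro k
      rw [pd_mul hcd hvd k, pd_one_add_exp hφd k]
    unfold jacobiBracket
    simp only [hpdu, hpdv]
    simp only [hpdu, hpdv, hQdef, hbdef, hcdef, Pi.add_apply, Matrix.add_apply, gaugeP, gaugeA,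
      Matrix.of_apply]
    exact key (P x) (hPskew x) (a x) (Real.exp (φ x)) (u x) (v x)
      (fun j => pd φ j x) (fun k => pd u k x) (fun k => pd v k x)
  -- main argument
  intro f g h hf hg hh
  have hF : ContDiff ℝ (⊤ : ℕ∞) (fun y => c y * f y) := hcs.mul hf
  have hG : ContDiff ℝ (⊤ : ℕ∞) (fun y => c y * g y) := hcs.mul hg
  have hH : ContDiff ℝ (⊤ : ℕ∞) (fun y => c y * h y) := hcs.mul hh
  have hBgh : ContDiff ℝ (⊤ : ℕ∞) (jacobiBracket Q b g h) := jacobiBracket_smooth hQ hb hg hh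
  have hBhf : ContDiff ℝ (⊤ : ℕ∞) (jacobiBracket Q b h f) := jacobiBracket_smooth hQ hb hh hf
  have hBfg : ContDiff ℝ (⊤ : ℕ∞) (jacobiBracket Q b f g) := jacobiBracket_smooth hQ hb hf hg
  have egh : (fun y => c y * jacobiBracket Q b g h y)
      = jacobiBracket P a (fun y => c y * g y) (fun y => c y * h y) := by
    funext y; exact bridge g h hg hh y
  have ehf : (fun y => c y * jacobiBracket Q b h f y)
      = jacobiBracket P a (fun y => c y * h y) (fun y => c y * f y) := by
    funext y; exact bridge h f hh hf y
  have efg : (fun y => c y * jacobiBracket Q b f g y)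
      = jacobiBracket P a (fun y => c y * f y) (fun y => c y * g y) := by
    funext y; exact bridge f g hf hg y
  funext x
  have t1 : c x * jacobiBracket Q b f (jacobiBracket Q b g h) x
      = jacobiBracket P a (fun y => c y * f y)
          (jacobiBracket P a (fun y => c y * g y) (fun y => c y * h y)) x := by
    rw [bridge f (jacobiBracket Q b g h) hf hBgh x, egh]
  have t2 : c x * jacobiBracket Q b g (jacobiBracket Q b h f) x
      = jacobiBracket P a (fun y => c y * g y)
          (jacobiBracket P a (fun y => c y * h y) (fun y => c y * f y)) x := by
    rw [bridge g (jacobiBracket Q b h f) hg hBhf x, ehf]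
  have t3 : c x * jacobiBracket Q b h (jacobiBracket Q b f g) x
      = jacobiBracket P a (fun y => c y * h y)
          (jacobiBracket P a (fun y => c y * f y) (fun y => c y * g y)) x := by
    rw [bridge h (jacobiBracket Q b f g) hh hBfg x, efg]
  have hzero := congrFun (hJac (fun y => c y * f y) (fun y => c y * g y)
    (fun y => c y * h y) hF hG hH) x
  simp only [Pi.add_apply, Pi.zero_apply] at hzero ⊢
  have hmul : c x * (jacobiBracket Q b f (jacobiBracket Q b g h) x
      + jacobiBracket Q b g (jacobiBracket Q b h f) x
      + jacobiBracket Q b h (jacobiBracket Q b f g) x) = 0 := by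
    rw [mul_add, mul_add, t1, t2, t3]
    linarith [hzero]
  exact (mul_eq_zero.mp hmul).resolve_left (hcne x)
end

section
/- Let V be a real vector space equipped with two skew-symmetric bilinear maps B₁, B₂ : V × V → V (i.e., Bᵢ(f, g) = −Bᵢ(g, f) for all f, g ∈ V). Let (I_k)_{k ≥ 0} be a sequence in V satisfying the recursion B₁(I_{k−1}, f) = B₂(I_k, f) for every k ≥ 1 and every f ∈ V. Then the I_k are in involution with respect to both brackets: B₁(I_j, I_k) = 0 and B₂(I_j, I_k) = 0 for all j, k ≥ 0. -/
/-- Lenard recursion lemma: if `B₁, B₂` are skew-symmetric bilinear maps on a real vector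
space `V` and the sequence `I : ℕ → V` satisfies `B₁ (I k) f = B₂ (I (k+1)) f` for all `k`
and all `f`, then the `I k` are in involution with respect to both brackets. -/
theorem lenard_involution {V : Type*} [AddCommGroup V] [Module ℝ V]
    (B₁ B₂ : V →ₗ[ℝ] V →ₗ[ℝ] V)
    (hB₁skew : ∀ f g : V, B₁ f g = - B₁ g f)
    (hB₂skew : ∀ f g : V, B₂ f g = - B₂ g f)
    (I : ℕ → V)
    (hrec : ∀ k : ℕ, ∀ f : V, B₁ (I k) f = B₂ (I (k + 1)) f) :
    ∀ j k : ℕ, B₁ (I j) (I k) = 0 ∧ B₂ (I j) (I k) = 0 := by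
  have shift : ∀ j k : ℕ, B₂ (I (j + 1)) (I k) = B₂ (I j) (I (k + 1)) := by
    intro j k
    rw [← hrec j (I k), hB₁skew, hrec k (I j), hB₂skew, neg_neg]
  have diag : ∀ j k : ℕ, B₂ (I j) (I k) = B₂ (I 0) (I (j + k)) := by
    intro j
    induction j with
    | zero => intro k; simp
    | succ n ih =>
      intro k
      rw [shift n k, ih (k + 1)]
      ring_nf
  have h2 : ∀ j k : ℕ, B₂ (I j) (I k) = 0 := by
    intro j k
    have h := hB₂skew (I j) (I k)
    rw [diag j k, diag k j, Nat.add_comm k j] at h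
    rw [eq_neg_iff_add_eq_zero, ← two_smul ℝ] at h
    rw [diag j k]
    simpa using smul_eq_zero.mp h
  intro j k
  exact ⟨by rw [hrec j (I k)]; exact h2 (j+1) k, h2 j k⟩
end
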